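/- If B ⊆ Σⁿ is (1,1)-guaranteed, then for any two sequences s, t ∈ Σⁿ with edit(s,t) = 3, there exists v ∈ B with edit(s,v) ≤ 2 and edit(t,v) ≤ 2; hence the bucketing function f_B^2(s) = N_n^2(s) ∩ B is (3,5)-sensitive. -/

import Mathlib

/-!
If `editDist s t ≤ 3`, an optimal alignment splits into a part of cost at most one and a part of
cost at most two, with an intermediate sequence `C` of length `n`. Choosing a position of `C` at
an insertion or substitution of the second part gives a slot `l ++ _ :: r` of length `n` all of
whose fillings lie within distance `2` of both `s` and `t`. Two fillings by distinct letters are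
at distance `1`, so `B` contains some `v` within distance `1` of both, and a sequence of length
`n` that is that close to two different fillings is itself a filling. Separation of pairs at
distance at least `5` is the triangle inequality.
-/

/-- Cost structure for the Levenshtein distance (as formerly in Mathlib's
`Mathlib/Data/List/EditDistance/Defs.lean`, since removed from Mathlib). -/
structure Levenshtein.Cost (α β δ : Type*) where
  /-- Cost to delete an element from a list. -/
  delete : α → δ
  /-- Cost to insert an element into a list. -/
  insert : β → δ
  /-- Cost to substitute one element for another in a list. -/
  substitute : α → β → δ

/-- The default cost structure, for which all operations cost `1`. -/
def Levenshtein.defaultCost {α : Type*} [DecidableEq α] : Levenshtein.Cost α α ℕ where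
  delete _ := 1
  insert _ := 1
  substitute a b := if a = b then 0 else 1

/-- (Implementation detail of the former Mathlib `levenshtein`.) -/
def Levenshtein.impl {α β δ : Type*} [AddZeroClass δ] [Min δ] (C : Levenshtein.Cost α β δ)
    (xs : List α) (y : β) (d : {r : List δ // 0 < r.length}) :
    {r : List δ // 0 < r.length} :=
  let ⟨ds, w⟩ := d
  xs.zip (ds.zip ds.tail) |>.foldr
    (init := ⟨[C.insert y + ds.getLast (List.ne_nil_of_length_pos w)], by simp⟩)
    (fun ⟨x, d₀, d₁⟩ ⟨r, w⟩ =>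
      ⟨min (C.delete x + r[0]) (min (C.insert y + d₀) (C.substitute x y + d₁)) :: r, by simp⟩)

/-- `suffixLevenshtein C xs ys` computes the Levenshtein distance from each suffix of `xs`
to `ys` (as formerly in Mathlib). -/
def suffixLevenshtein {α β δ : Type*} [AddZeroClass δ] [Min δ] (C : Levenshtein.Cost α β δ)
    (xs : List α) (ys : List β) : {r : List δ // 0 < r.length} :=
  ys.foldr
    (Levenshtein.impl C xs)
    (xs.foldr (init := ⟨[0], by simp⟩) (fun a ⟨r, w⟩ => ⟨(C.delete a + r[0]) :: r, by simp⟩))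

/-- The Levenshtein distance between two lists, with respect to the costs `C`
(as formerly in Mathlib). -/
def levenshtein {α β δ : Type*} [AddZeroClass δ] [Min δ] (C : Levenshtein.Cost α β δ)
    (xs : List α) (ys : List β) : δ :=
  let ⟨r, w⟩ := suffixLevenshtein C xs ys
  r[0]

/-- Edit (Levenshtein) distance between two length-`n` sequences over `α`. -/
def editDist {α : Type*} [DecidableEq α] {n : ℕ} (s t : Fin n → α) : ℕ :=
  levenshtein Levenshtein.defaultCost (List.ofFn s) (List.ofFn t)

/-- `B` is a `(d, r)`-guaranteed subset of `Σⁿ`: for every pair of sequences within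
edit distance `d`, some sequence of `B` lies in both of their `r`-neighborhoods. -/
def IsGuaranteed {α : Type*} [DecidableEq α] {n : ℕ} (d r : ℕ)
    (B : Set (Fin n → α)) : Prop :=
  ∀ s t : Fin n → α, editDist s t ≤ d →
    ∃ v ∈ B, editDist s v ≤ r ∧ editDist t v ≤ r

section Recurrences

open Levenshtein

variable {α β δ : Type*} [AddZeroClass δ] [Min δ] {C : Cost α β δ}

theorem Levenshtein.impl_length (xs : List α) (y : β) (d : {r : List δ // 0 < r.length})
    (w : d.1.length = xs.length + 1) :
    (impl C xs y d).1.length = xs.length + 1 := by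
  induction xs generalizing d with
  | nil => rfl
  | cons x xs ih =>
    match d, w with
    | ⟨_ :: d₁ :: ds, _⟩, w =>
      exact congrArg (· + 1) (ih ⟨d₁ :: ds, by simp⟩ (by simpa using w))

theorem suffixLevenshtein_length (xs : List α) (ys : List β) :
    (suffixLevenshtein C xs ys).1.length = xs.length + 1 := by
  induction ys with
  | nil => induction xs <;> simp_all [suffixLevenshtein]
  | cons y ys ih => exact impl_length xs y _ ih

theorem Levenshtein.impl_cons_tail (x : α) (xs : List α) (y : β)
    (d : {r : List δ // 0 < r.length}) (h : 0 < d.1.tail.length) :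
    (impl C (x :: xs) y d).1.tail = (impl C xs y ⟨d.1.tail, h⟩).1 :=
  match d, h with | ⟨_ :: _ :: _, _⟩, _ => rfl

theorem Levenshtein.impl_cons_getElem_zero (x : α) (xs : List α) (y : β)
    (d : {r : List δ // 0 < r.length}) (d₀ : δ) (ds : List δ) (hd : d.1 = d₀ :: ds)
    (h : 0 < ds.length) :
    (impl C (x :: xs) y d).1[0]'(impl C (x :: xs) y d).2 =
      min (C.delete x + (impl C xs y ⟨ds, h⟩).1[0]'(impl C xs y ⟨ds, h⟩).2)
        (min (C.insert y + d₀) (C.substitute x y + ds[0])) := by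
  obtain ⟨_, _⟩ := d
  subst hd
  match ds, h with | _ :: _, _ => rfl

theorem suffixLevenshtein_cons_left (x : α) (xs : List α) (ys : List β) :
    (suffixLevenshtein C (x :: xs) ys).1 =
      levenshtein C (x :: xs) ys :: (suffixLevenshtein C xs ys).1 := by
  suffices h : (suffixLevenshtein C (x :: xs) ys).1.tail = (suffixLevenshtein C xs ys).1 by
    rw [← h]
    unfold levenshtein
    generalize suffixLevenshtein C (x :: xs) ys = S
    match S with | ⟨_ :: _, _⟩ => rfl
  induction ys with
  | nil => rfl
  | cons y ys ih =>
    have hlen : 0 < (suffixLevenshtein C (x :: xs) ys).1.tail.length := by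
      simp [ih, suffixLevenshtein_length]
    exact (impl_cons_tail x xs y _ hlen).trans (by congr)

theorem levenshtein_cons_nil (x : α) (xs : List α) :
    levenshtein C (x :: xs) ([] : List β) = C.delete x + levenshtein C xs [] := rfl

theorem levenshtein_nil_cons (y : β) (ys : List β) :
    levenshtein C ([] : List α) (y :: ys) = C.insert y + levenshtein C [] ys := by
  have h := suffixLevenshtein_length (C := C) [] ys
  unfold levenshtein
  rw [suffixLevenshtein, List.foldr_cons, ← suffixLevenshtein]
  generalize suffixLevenshtein C ([] : List α) ys = S at h
  match S, h with | ⟨[_], _⟩, _ => rfl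

theorem levenshtein_cons_cons (x : α) (xs : List α) (y : β) (ys : List β) :
    levenshtein C (x :: xs) (y :: ys) =
      min (C.delete x + levenshtein C xs (y :: ys))
        (min (C.insert y + levenshtein C (x :: xs) ys)
          (C.substitute x y + levenshtein C xs ys)) :=
  impl_cons_getElem_zero x xs y _ _ _ (suffixLevenshtein_cons_left x xs ys)
    (suffixLevenshtein C xs ys).2

end Recurrences

namespace Levenshtein

variable {α : Type*} [DecidableEq α]

local notation "lev" => levenshtein Levenshtein.defaultCost

theorem defaultCost_substitute (x y : α) :
    defaultCost.substitute x y = if x = y then 0 else 1 := rfl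

@[simp] theorem defaultCost_substitute_self (x : α) : defaultCost.substitute x x = 0 := by
  simp [defaultCost_substitute]

theorem defaultCost_substitute_le_one (x y : α) : defaultCost.substitute x y ≤ 1 := by
  rw [defaultCost_substitute]; split <;> omega

theorem defaultCost_substitute_comm (x y : α) :
    defaultCost.substitute x y = defaultCost.substitute y x := by
  simp only [defaultCost_substitute, eq_comm]

theorem defaultCost_substitute_le_add (x y z : α) :
    defaultCost.substitute x z ≤ defaultCost.substitute x y + defaultCost.substitute y z := by
  simp only [defaultCost_substitute]; split_ifs <;> simp_all

theorem lev_nil_left (ys : List α) : lev [] ys = ys.length := by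
  induction ys with
  | nil => rfl
  | cons y ys ih => rw [levenshtein_nil_cons, ih, List.length_cons, Nat.add_comm]; rfl

theorem lev_nil_right (xs : List α) : lev xs [] = xs.length := by
  induction xs with
  | nil => rfl
  | cons x xs ih => rw [levenshtein_cons_nil, ih, List.length_cons, Nat.add_comm]; rfl

theorem lev_cons_cons (x y : α) (xs ys : List α) :
    lev (x :: xs) (y :: ys) =
      min (1 + lev xs (y :: ys))
        (min (1 + lev (x :: xs) ys) (defaultCost.substitute x y + lev xs ys)) :=
  levenshtein_cons_cons x xs y ys

theorem lev_cons_cons_cases (x y : α) (xs ys : List α) :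
    lev (x :: xs) (y :: ys) = 1 + lev xs (y :: ys) ∨
      lev (x :: xs) (y :: ys) = 1 + lev (x :: xs) ys ∨
      x = y ∧ lev (x :: xs) (y :: ys) = lev xs ys ∨
      lev (x :: xs) (y :: ys) = 1 + lev xs ys := by
  rw [lev_cons_cons, defaultCost_substitute]
  split_ifs with h <;> simp only [h, true_and, false_and, false_or] <;> omega

theorem lev_cons_le_left (x : α) (xs ys : List α) : lev (x :: xs) ys ≤ 1 + lev xs ys := by
  cases ys with
  | nil => simp [lev_nil_right, Nat.add_comm]
  | cons y ys => rw [lev_cons_cons]; exact min_le_left _ _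

theorem lev_cons_le_right (y : α) (xs ys : List α) : lev xs (y :: ys) ≤ 1 + lev xs ys := by
  cases xs with
  | nil => simp [lev_nil_left, Nat.add_comm]
  | cons x xs => rw [lev_cons_cons]; exact (min_le_right _ _).trans (min_le_left _ _)

theorem lev_cons_cons_le (x y : α) (xs ys : List α) :
    lev (x :: xs) (y :: ys) ≤ defaultCost.substitute x y + lev xs ys := by
  rw [lev_cons_cons]; exact (min_le_right _ _).trans (min_le_right _ _)

theorem lev_cons_cons_le_succ (x y : α) (xs ys : List α) :
    lev (x :: xs) (y :: ys) ≤ 1 + lev xs ys :=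
  (lev_cons_cons_le x y xs ys).trans (Nat.add_le_add_right (defaultCost_substitute_le_one x y) _)

theorem lev_le_cons_left (x : α) (xs ys : List α) : lev xs ys ≤ 1 + lev (x :: xs) ys := by
  induction ys with
  | nil => simp only [lev_nil_right, List.length_cons]; omega
  | cons y ys ih =>
    have := lev_cons_le_right y xs ys
    rw [lev_cons_cons]
    omega

theorem lev_symm (xs ys : List α) : lev xs ys = lev ys xs := by
  match xs, ys with
  | [], _ | _ :: _, [] => rw [lev_nil_left, lev_nil_right]
  | x :: xs, y :: ys =>
    rw [lev_cons_cons, lev_cons_cons, lev_symm xs (y :: ys), lev_symm (x :: xs) ys,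
      lev_symm xs ys, defaultCost_substitute_comm]
    omega
termination_by xs.length + ys.length

theorem lev_le_cons_right (y : α) (xs ys : List α) : lev xs ys ≤ 1 + lev xs (y :: ys) := by
  rw [lev_symm xs ys, lev_symm xs]; exact lev_le_cons_left y ys xs

theorem lev_cons_cons_self (x : α) (xs ys : List α) : lev (x :: xs) (x :: ys) = lev xs ys := by
  have := lev_le_cons_left x xs ys
  have := lev_le_cons_right x xs ys
  rw [lev_cons_cons, defaultCost_substitute_self]
  omega

@[simp] theorem lev_self (xs : List α) : lev xs xs = 0 := by
  induction xs with
  | nil => rfl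
  | cons x xs ih => rw [lev_cons_cons_self, ih]

theorem eq_of_lev_eq_zero {xs ys : List α} (h : lev xs ys = 0) : xs = ys := by
  induction xs generalizing ys with
  | nil => rw [lev_nil_left, List.length_eq_zero_iff] at h; exact h.symm
  | cons x xs ih =>
    cases ys with
    | nil => simp [lev_nil_right] at h
    | cons y ys =>
      rcases lev_cons_cons_cases x y xs ys with h' | h' | ⟨rfl, h'⟩ | h' <;> try omega
      rw [ih (h'.symm.trans h)]

theorem lev_pos_of_length_ne {xs ys : List α} (h : xs.length ≠ ys.length) : 0 < lev xs ys :=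
  Nat.pos_of_ne_zero fun h₀ => h (congrArg List.length (eq_of_lev_eq_zero h₀))

theorem lev_triangle (xs ys zs : List α) : lev xs zs ≤ lev xs ys + lev ys zs := by
  match xs, ys, zs with
  | [], [], _ => simp [lev_nil_left]
  | x :: xs, [], zs =>
    have := lev_cons_le_left x xs zs
    have := lev_triangle xs [] zs
    simp only [lev_nil_right, lev_nil_left, List.length_cons] at *
    omega
  | [], y :: ys, zs =>
    have := lev_le_cons_left y ys zs
    have := lev_triangle [] ys zs
    simp only [lev_nil_left, List.length_cons] at *
    omega
  | x :: xs, y :: ys, [] =>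
    have := lev_le_cons_right y (x :: xs) ys
    have := lev_triangle (x :: xs) ys []
    simp only [lev_nil_right, List.length_cons] at *
    omega
  | x :: xs, y :: ys, z :: zs =>
    have e₁ := lev_cons_cons x y xs ys
    have e₂ := lev_cons_cons y z ys zs
    have := lev_cons_le_left x xs (z :: zs)
    have := lev_cons_le_right z (x :: xs) zs
    have := lev_cons_cons_le x z xs zs
    have := lev_le_cons_left y ys (z :: zs)
    have := defaultCost_substitute_le_add x y z
    have := lev_triangle xs (y :: ys) (z :: zs)
    have := lev_triangle (x :: xs) ys (z :: zs)
    have := lev_triangle xs ys (z :: zs)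
    have := lev_triangle (x :: xs) (y :: ys) zs
    have := lev_triangle xs ys zs
    omega
termination_by xs.length + ys.length + zs.length

theorem lev_append_left (l xs ys : List α) : lev (l ++ xs) (l ++ ys) = lev xs ys := by
  induction l with
  | nil => rfl
  | cons x l ih => rw [List.cons_append, List.cons_append, lev_cons_cons_self, ih]

theorem lev_append_cons_append_cons_le (l r : List α) (a b : α) :
    lev (l ++ a :: r) (l ++ b :: r) ≤ 1 := by
  simpa [lev_append_left] using lev_cons_cons_le_succ a b r r

theorem lev_append_append_cons_le (l r : List α) (e : α) : lev (l ++ r) (l ++ e :: r) ≤ 1 := by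
  simpa [lev_append_left] using lev_cons_le_right e r r

theorem exists_eq_append_cons_lev_lt {A B : List α} (hlen : A.length < B.length) :
    ∃ l e r, B = l ++ e :: r ∧ lev A (l ++ r) < lev A B := by
  induction A generalizing B with
  | nil =>
    obtain ⟨b, B, rfl⟩ := List.exists_cons_of_length_pos hlen
    exact ⟨[], b, B, rfl, by simp [lev_nil_left]⟩
  | cons a A ih =>
    obtain ⟨b, B, rfl⟩ := List.exists_cons_of_length_pos (Nat.zero_lt_of_lt hlen)
    rcases lev_cons_cons_cases a b A B with h | h | ⟨rfl, h⟩ | h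
    · obtain ⟨l, e, r, hB, hlt⟩ :=
        ih (B := b :: B) (by simp only [List.length_cons] at *; omega)
      exact ⟨l, e, r, hB, by have := lev_cons_le_left a A (l ++ r); omega⟩
    · exact ⟨[], b, B, rfl, by simp only [List.nil_append]; omega⟩
    · obtain ⟨l, e, r, rfl, hlt⟩ := ih (B := B) (by simpa using hlen)
      exact ⟨a :: l, e, r, rfl, by rw [List.cons_append, lev_cons_cons_self]; omega⟩
    · obtain ⟨l, e, r, rfl, hlt⟩ := ih (B := B) (by simpa using hlen)
      have := lev_cons_cons_le_succ a b A (l ++ r)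
      exact ⟨b :: l, e, r, rfl, by simp only [List.cons_append]; omega⟩

theorem exists_eq_append_cons_forall_lev_le {A B : List α} (hlen : A.length ≤ B.length)
    (hB : B ≠ []) :
    ∃ l e r, B = l ++ e :: r ∧ ∀ c, lev A (l ++ c :: r) ≤ max (lev A B) 1 := by
  induction A generalizing B with
  | nil =>
    obtain ⟨b, B, rfl⟩ := List.exists_cons_of_ne_nil hB
    exact ⟨[], b, B, rfl, fun c => by simp [lev_nil_left]⟩
  | cons a A ih =>
    obtain ⟨b, B, rfl⟩ := List.exists_cons_of_ne_nil hB
    simp only [List.length_cons, Nat.add_le_add_iff_right] at hlen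
    by_cases hAB : A = B
    · subst hAB
      refine ⟨[], b, A, rfl, fun c => ?_⟩
      have := lev_cons_cons_le_succ a c A A
      simp only [lev_self, List.nil_append] at *
      omega
    have hpos : lev A B ≠ 0 := fun h => hAB (eq_of_lev_eq_zero h)
    have hB' : B ≠ [] := by
      rintro rfl
      exact hAB (List.length_eq_zero_iff.mp (Nat.le_zero.mp hlen))
    rcases lev_cons_cons_cases a b A B with h | h | ⟨rfl, h⟩ | h
    · have hlen' : A.length < (b :: B).length := Nat.lt_succ_of_le hlen
      have hpos' := lev_pos_of_length_ne hlen'.ne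
      obtain ⟨l, e, r, hB, hc⟩ := ih hlen'.le (List.cons_ne_nil _ _)
      exact ⟨l, e, r, hB, fun c => by
        have := lev_cons_le_left a A (l ++ c :: r); have := hc c; omega⟩
    · exact ⟨[], b, B, rfl, fun c => by
        have := lev_cons_le_right c (a :: A) B; simp only [List.nil_append]; omega⟩
    · obtain ⟨l, e, r, rfl, hc⟩ := ih hlen hB'
      exact ⟨a :: l, e, r, rfl, fun c => by
        rw [List.cons_append, lev_cons_cons_self]; have := hc c; omega⟩
    · obtain ⟨l, e, r, rfl, hc⟩ := ih hlen hB'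
      exact ⟨b :: l, e, r, rfl, fun c => by
        have := lev_cons_cons_le_succ a b A (l ++ c :: r); have := hc c
        simp only [List.cons_append]; omega⟩

theorem exists_lev_cons_le_one_lev_le_two (x : α) {A B : List α} (hlen : A.length < B.length)
    (h : lev A B ≤ 2) : ∃ C, C.length = B.length ∧ lev (x :: A) C ≤ 1 ∧ lev B C ≤ 2 := by
  obtain ⟨l, e, r, rfl, hlt⟩ := exists_eq_append_cons_lev_lt hlen
  refine ⟨x :: (l ++ r), by simp [Nat.add_assoc], by rw [lev_cons_cons_self]; omega, ?_⟩
  calc lev (l ++ e :: r) (x :: (l ++ r))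
      ≤ lev (l ++ e :: r) (l ++ r) + lev (l ++ r) (x :: (l ++ r)) := lev_triangle _ _ _
    _ ≤ 1 + 1 := by
      gcongr
      · rw [lev_symm]; exact lev_append_append_cons_le l r e
      · simpa using lev_cons_le_right x (l ++ r) (l ++ r)

theorem exists_lev_le_one_lev_le_two {A B : List α} (hlen : A.length = B.length)
    (h : lev A B ≤ 3) :
    ∃ C, C.length = A.length ∧ (lev A C ≤ 1 ∧ lev B C ≤ 2 ∨ lev B C ≤ 1 ∧ lev A C ≤ 2) := by
  induction A generalizing B with
  | nil => exact ⟨[], rfl, Or.inl (by simp [List.length_eq_zero_iff.mp hlen.symm])⟩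
  | cons a A ih =>
    obtain ⟨b, B, rfl⟩ := List.exists_cons_of_length_pos (l := B) (by simp [← hlen])
    simp only [List.length_cons, Nat.add_right_cancel_iff] at hlen
    rcases lev_cons_cons_cases a b A B with h' | h' | ⟨rfl, h'⟩ | h'
    · obtain ⟨C, hC, h₁, h₂⟩ := exists_lev_cons_le_one_lev_le_two a (A := A) (B := b :: B)
        (by simp only [List.length_cons]; omega) (by omega)
      exact ⟨C, by simp [hC, hlen], Or.inl ⟨h₁, h₂⟩⟩
    · obtain ⟨C, hC, h₁, h₂⟩ := exists_lev_cons_le_one_lev_le_two b (A := B) (B := a :: A)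
        (by simp only [List.length_cons]; omega) (by rw [lev_symm]; omega)
      exact ⟨C, hC, Or.inr ⟨h₁, h₂⟩⟩
    · obtain ⟨C, hC, hAC⟩ := ih hlen (by omega)
      exact ⟨a :: C, by simp [hC], by simpa only [lev_cons_cons_self] using hAC⟩
    · refine ⟨b :: A, rfl, Or.inl ⟨?_, ?_⟩⟩
      · simpa using lev_cons_cons_le_succ a b A A
      · rw [lev_cons_cons_self, lev_symm]; omega

theorem exists_slot_of_lev_le_one_of_lev_le_two {P Q C : List α} (hlen : Q.length ≤ C.length)
    (hC : C ≠ []) (hP : lev P C ≤ 1) (hQ : lev Q C ≤ 2) :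
    ∃ l r, (l ++ r).length + 1 = C.length ∧
      ∀ c, lev P (l ++ c :: r) ≤ 2 ∧ lev Q (l ++ c :: r) ≤ 2 := by
  obtain ⟨l, e, r, rfl, hslot⟩ := exists_eq_append_cons_forall_lev_le hlen hC
  refine ⟨l, r, by simp [Nat.add_assoc], fun c => ⟨?_, by have := hslot c; omega⟩⟩
  calc lev P (l ++ c :: r) ≤ lev P (l ++ e :: r) + lev (l ++ e :: r) (l ++ c :: r) :=
        lev_triangle _ _ _
    _ ≤ 1 + 1 := add_le_add hP (lev_append_cons_append_cons_le l r e c)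

theorem exists_slot_of_lev_le_three {A B : List α} (hlen : A.length = B.length) (hA : A ≠ [])
    (h : lev A B ≤ 3) :
    ∃ l r, (l ++ r).length + 1 = A.length ∧
      ∀ c, lev A (l ++ c :: r) ≤ 2 ∧ lev B (l ++ c :: r) ≤ 2 := by
  obtain ⟨C, hC, hAC | hBC⟩ := exists_lev_le_one_lev_le_two hlen h
  all_goals have hC' : C ≠ [] := List.ne_nil_of_length_pos (hC ▸ List.length_pos_of_ne_nil hA)
  · rw [← hC]
    exact exists_slot_of_lev_le_one_of_lev_le_two (by omega) hC' hAC.1 hAC.2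
  · obtain ⟨l, r, hlr, hslot⟩ :=
      exists_slot_of_lev_le_one_of_lev_le_two (by omega) hC' hBC.1 hBC.2
    exact ⟨l, r, hC ▸ hlr, fun c => (hslot c).symm⟩

theorem eq_of_lev_cons_cons_le_one {x y : α} {xs ys : List α} (hxy : x ≠ y)
    (hlen : xs.length = ys.length) (h : lev (x :: xs) (y :: ys) ≤ 1) : xs = ys := by
  have := lev_pos_of_length_ne (xs := xs) (ys := y :: ys) (by simp [hlen])
  have := lev_pos_of_length_ne (xs := x :: xs) (ys := ys) (by simp [hlen])
  rcases lev_cons_cons_cases x y xs ys with h' | h' | ⟨rfl, -⟩ | h'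
  · omega
  · omega
  · exact absurd rfl hxy
  · exact eq_of_lev_eq_zero (by omega)

theorem exists_eq_append_cons_of_lev_le_one {X l r : List α} {a b : α} (hab : a ≠ b)
    (hlen : X.length = (l ++ a :: r).length) (ha : lev X (l ++ a :: r) ≤ 1)
    (hb : lev X (l ++ b :: r) ≤ 1) : ∃ d, X = l ++ d :: r := by
  induction l generalizing X with
  | nil =>
    obtain ⟨x, X, rfl⟩ := List.exists_cons_of_length_pos (l := X) (by simp [hlen])
    simp only [List.nil_append, List.length_cons, Nat.add_right_cancel_iff] at *
    by_cases hxa : x = a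
    · exact ⟨x, by rw [eq_of_lev_cons_cons_le_one (hxa ▸ hab) hlen hb]⟩
    · exact ⟨x, by rw [eq_of_lev_cons_cons_le_one hxa hlen ha]⟩
  | cons y l ih =>
    obtain ⟨x, X, rfl⟩ := List.exists_cons_of_length_pos (l := X) (by simp [hlen])
    simp only [List.cons_append, List.length_cons, Nat.add_right_cancel_iff] at *
    by_cases hxy : x = y
    · subst hxy
      rw [lev_cons_cons_self] at ha hb
      obtain ⟨d, rfl⟩ := ih hlen ha hb
      exact ⟨d, rfl⟩
    · have ha' := eq_of_lev_cons_cons_le_one hxy hlen ha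
      have hb' := eq_of_lev_cons_cons_le_one hxy (by simp_all) hb
      simp_all

end Levenshtein

theorem List.exists_ofFn_eq {α : Type*} {n : ℕ} {L : List α} (h : L.length = n) :
    ∃ f : Fin n → α, List.ofFn f = L := by
  subst h
  exact ⟨fun i => L[i], List.ofFn_getElem⟩

section EditDist

variable {α : Type*} [DecidableEq α] {n : ℕ}

theorem editDist_self (s : Fin n → α) : editDist s s = 0 :=
  Levenshtein.lev_self _

theorem editDist_comm (s t : Fin n → α) : editDist s t = editDist t s :=
  Levenshtein.lev_symm _ _

theorem editDist_triangle (s t u : Fin n → α) : editDist s u ≤ editDist s t + editDist t u :=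
  Levenshtein.lev_triangle _ _ _

open Levenshtein in
theorem IsGuaranteed.three_two {B : Set (Fin n → α)} (hB : IsGuaranteed 1 1 B) :
    IsGuaranteed 3 2 B := by
  intro s t hst
  by_cases heq : s = t
  · subst heq
    obtain ⟨v, hvB, hv, -⟩ := hB s s (by simp [editDist_self])
    exact ⟨v, hvB, by omega, by omega⟩
  obtain ⟨i, hi⟩ := Function.ne_iff.mp heq
  have hs : List.ofFn s ≠ [] := List.ne_nil_of_length_pos (by simpa using i.pos)
  obtain ⟨l, r, hlr, hslot⟩ := exists_slot_of_lev_le_three (by simp) hs hst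
  choose w hw using fun c => List.exists_ofFn_eq (n := n) (L := l ++ c :: r)
    (by simp only [List.length_append, List.length_cons, List.length_ofFn] at hlr ⊢; omega)
  obtain ⟨v, hvB, hv₁, hv₂⟩ := hB (w (s i)) (w (t i)) (by
    unfold editDist; rw [hw, hw]; exact lev_append_cons_append_cons_le l r _ _)
  obtain ⟨d, hd⟩ := exists_eq_append_cons_of_lev_le_one (X := List.ofFn v) (l := l) (r := r) hi
    (by rw [← hw, List.length_ofFn, List.length_ofFn])
    (by rw [lev_symm, ← hw]; exact hv₁) (by rw [lev_symm, ← hw]; exact hv₂)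
  exact ⟨v, hvB, by unfold editDist; rw [hd]; exact (hslot d).1,
    by unfold editDist; rw [hd]; exact (hslot d).2⟩

end EditDist

theorem stmt19_general {α : Type*} [DecidableEq α]
    {n : ℕ} (B : Set (Fin n → α)) (hB : IsGuaranteed 1 1 B) :
    (∀ s t : Fin n → α, editDist s t = 3 →
      ∃ v ∈ B, editDist s v ≤ 2 ∧ editDist t v ≤ 2) ∧
    ((∀ s t : Fin n → α, editDist s t ≤ 3 →
        ({v ∈ B | editDist s v ≤ 2} ∩ {v ∈ B | editDist t v ≤ 2}).Nonempty) ∧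
     (∀ s t : Fin n → α, 5 ≤ editDist s t →
        {v ∈ B | editDist s v ≤ 2} ∩ {v ∈ B | editDist t v ≤ 2} = ∅)) := by
  have h32 := hB.three_two
  refine ⟨fun s t h => h32 s t h.le, fun s t h => ?_, fun s t h => ?_⟩
  · obtain ⟨v, hvB, hs, ht⟩ := h32 s t h
    exact ⟨v, ⟨hvB, hs⟩, hvB, ht⟩
  · refine Set.eq_empty_of_forall_notMem fun v ⟨⟨_, hs⟩, _, ht⟩ => ?_
    have := editDist_triangle s v t
    rw [editDist_comm v t] at this
    omega

theorem stmt19 {α : Type*} [Fintype α] [DecidableEq α] (hα : 1 < Fintype.card α)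
    {n : ℕ} (B : Set (Fin n → α)) (hB : IsGuaranteed 1 1 B) :
    (∀ s t : Fin n → α, editDist s t = 3 →
      ∃ v ∈ B, editDist s v ≤ 2 ∧ editDist t v ≤ 2) ∧
    ((∀ s t : Fin n → α, editDist s t ≤ 3 →
        ({v ∈ B | editDist s v ≤ 2} ∩ {v ∈ B | editDist t v ≤ 2}).Nonempty) ∧
     (∀ s t : Fin n → α, 5 ≤ editDist s t →
        {v ∈ B | editDist s v ≤ 2} ∩ {v ∈ B | editDist t v ≤ 2} = ∅)) :=
  stmt19_general B hB
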